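/- arXiv:1205.1752 — 4 statements merged into one kernel-verified Lean document; each statement's English description precedes it below -/
import Mathlib

section
/- Let G be a graph and S ⊆ V(G) a (k,τ)-regular set with τ > 0, and let λ be an eigenvalue of the adjacency matrix A(G). Then λ is non-main if and only if λ = k − τ or the characteristic vector of S is orthogonal to the eigenspace of A(G) associated with λ. -/
open scoped Classical

/-- Adjacency matrix of a simple graph over the reals. -/
noncomputable def adjMat {W : Type*} [Fintype W] (G : SimpleGraph W) : Matrix W W ℝ :=
  fun x y => if G.Adj x y then 1 else 0

/-- `μ` is an eigenvalue of the adjacency matrix of `G`. -/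
def IsEigen {W : Type*} [Fintype W] (G : SimpleGraph W) (μ : ℝ) : Prop :=
  ∃ v : W → ℝ, v ≠ 0 ∧ (adjMat G).mulVec v = μ • v

/-- Largest adjacency eigenvalue. -/
noncomputable def lamMax {W : Type*} [Fintype W] (G : SimpleGraph W) : ℝ :=
  sSup {μ | IsEigen G μ}

/-- Smallest adjacency eigenvalue. -/
noncomputable def lamMin {W : Type*} [Fintype W] (G : SimpleGraph W) : ℝ :=
  sInf {μ | IsEigen G μ}

/-- Spread of a graph: largest minus smallest adjacency eigenvalue. -/
noncomputable def spread {W : Type*} [Fintype W] (G : SimpleGraph W) : ℝ :=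
  lamMax G - lamMin G

/-- An eigenvalue is non-main if its eigenspace is orthogonal to the all-ones vector. -/
def IsNonMain {W : Type*} [Fintype W] (G : SimpleGraph W) (μ : ℝ) : Prop :=
  ∀ v : W → ℝ, (adjMat G).mulVec v = μ • v → ∑ i, v i = 0

/-- `S` is a `(k,τ)`-regular set in `G`. -/
def IsKTauRegularSet {W : Type*} [Fintype W] (G : SimpleGraph W) (S : Set W) (k τ : ℕ) : Prop :=
  (∀ i ∈ S, {j | j ∈ S ∧ G.Adj i j}.ncard = k) ∧
  (∀ i ∉ S, {j | j ∈ S ∧ G.Adj i j}.ncard = τ)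

/-- Characteristic vector of a vertex subset. -/
noncomputable def charVec {W : Type*} (S : Set W) : W → ℝ :=
  fun i => if i ∈ S then 1 else 0

/-- `G` is `d`-regular (each row of the adjacency matrix sums to `d`). -/
def IsReg {W : Type*} [Fintype W] (G : SimpleGraph W) (d : ℕ) : Prop :=
  ∀ i, ∑ j, adjMat G i j = (d : ℝ)

/-- Adjacency spectrum of `G` as a multiset (roots of the characteristic polynomial). -/
noncomputable def specMul {W : Type*} [Fintype W] (G : SimpleGraph W) : Multiset ℝ :=
  (adjMat G).charpoly.roots

/-- The `(H, 𝒮)`-generalized join of the family `G` constrained by vertex subsets `S`. -/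
def genJoin {p : ℕ} {V : Fin p → Type*} (H : SimpleGraph (Fin p))
    (G : ∀ i, SimpleGraph (V i)) (S : ∀ i, Set (V i)) : SimpleGraph (Σ i, V i) where
  Adj x y :=
    (∃ (i : Fin p) (a b : V i), x = ⟨i, a⟩ ∧ y = ⟨i, b⟩ ∧ (G i).Adj a b) ∨
    (x.1 ≠ y.1 ∧ H.Adj x.1 y.1 ∧ x.2 ∈ S x.1 ∧ y.2 ∈ S y.1)
  symm := by
    constructor
    rintro x y (⟨i, a, b, rfl, rfl, hab⟩ | ⟨hne, hH, hx, hy⟩)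
    · exact Or.inl ⟨i, b, a, rfl, rfl, hab.symm⟩
    · exact Or.inr ⟨hne.symm, hH.symm, hy, hx⟩
  loopless := by
    constructor
    rintro x (⟨i, a, b, rfl, h2, hab⟩ | ⟨hne, _⟩)
    · obtain ⟨rfl⟩ := heq_iff_eq.mp (Sigma.mk.inj_iff.mp h2).2
      exact (G i).irrefl hab
    · exact hne rfl

/-- The join of two vertex-disjoint graphs. -/
def joinG {A B : Type*} (G1 : SimpleGraph A) (G2 : SimpleGraph B) : SimpleGraph (A ⊕ B) where
  Adj x y :=
    match x, y with
    | .inl a, .inl b => G1.Adj a b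
    | .inr a, .inr b => G2.Adj a b
    | .inl _, .inr _ => True
    | .inr _, .inl _ => True
  symm := by
    constructor
    rintro (a | a) (b | b) h
    · exact h.symm
    · trivial
    · trivial
    · exact h.symm
  loopless := by
    constructor
    rintro (a | a) h
    · exact G1.irrefl h
    · exact G2.irrefl h

/-- `μ` is an eigenvalue of the real matrix `M`. -/
def matEigen {p : ℕ} (M : Matrix (Fin p) (Fin p) ℝ) (μ : ℝ) : Prop :=
  ∃ v : Fin p → ℝ, v ≠ 0 ∧ M.mulVec v = μ • v

noncomputable def matMax {p : ℕ} (M : Matrix (Fin p) (Fin p) ℝ) : ℝ :=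
  sSup {μ | matEigen M μ}

noncomputable def matMin {p : ℕ} (M : Matrix (Fin p) (Fin p) ℝ) : ℝ :=
  sInf {μ | matEigen M μ}

noncomputable def matSpread {p : ℕ} (M : Matrix (Fin p) (Fin p) ℝ) : ℝ :=
  matMax M - matMin M

/-- The matrix `M = A(H) N + D` associated with an `H`-join of regular graphs. -/
noncomputable def Mjoin {p : ℕ} (H : SimpleGraph (Fin p)) (n d : Fin p → ℕ) :
    Matrix (Fin p) (Fin p) ℝ :=
  adjMat H * Matrix.diagonal (fun i => (n i : ℝ)) + Matrix.diagonal (fun i => (d i : ℝ))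

/-- Average degree of a graph. -/
noncomputable def avgDeg {W : Type*} [Fintype W] (G : SimpleGraph W) : ℝ :=
  2 * G.edgeSet.ncard / Fintype.card W

/-- The graph `G(n,k) = K_k ∨ K̄_{n-k}`. -/
def Gnk (n k : ℕ) : SimpleGraph (Fin k ⊕ Fin (n - k)) :=
  joinG (⊤ : SimpleGraph (Fin k)) (⊥ : SimpleGraph (Fin (n - k)))


/-!
Pairing an eigenvector `v` of `A = A(G)` for `μ` with `A x_S = (k - τ) x_S + τ 𝟙` and using that
`A` is symmetric gives `τ ⟨𝟙, v⟩ = (μ - (k - τ)) ⟨x_S, v⟩`. As `τ ≠ 0`, `⟨𝟙, v⟩` vanishes on the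
whole eigenspace exactly when `μ = k - τ` or `⟨x_S, v⟩` does.
-/

open Matrix

theorem Matrix.IsSymm.mul_sum_eq_of_mulVec_eq {n R : Type*} [Fintype n] [CommRing R]
    {A : Matrix n n R} (hA : A.IsSymm) {x v : n → R} {a b μ : R}
    (hx : A *ᵥ x = a • x + b • 1) (hv : A *ᵥ v = μ • v) :
    b * ∑ i, v i = (μ - a) * (x ⬝ᵥ v) := by
  have hswap : x ⬝ᵥ A *ᵥ v = A *ᵥ x ⬝ᵥ v := by
    rw [dotProduct_mulVec, ← vecMul_transpose, hA.eq]
  rw [hv, hx, dotProduct_smul, add_dotProduct, smul_dotProduct, smul_dotProduct,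
    one_dotProduct] at hswap
  simp only [smul_eq_mul] at hswap
  linear_combination -hswap

theorem adjMat_eq_adjMatrix {W : Type*} [Fintype W] (G : SimpleGraph W) :
    adjMat G = G.adjMatrix ℝ := rfl

theorem adjMat_mulVec_charVec_apply {W : Type*} [Fintype W] (G : SimpleGraph W) (S : Set W)
    (i : W) : (adjMat G *ᵥ charVec S) i = {j | j ∈ S ∧ G.Adj i j}.ncard := by
  rw [adjMat_eq_adjMatrix, SimpleGraph.adjMatrix_mulVec_apply, Set.ncard_eq_toFinset_card']
  simp only [charVec, Finset.sum_boole]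
  congr 2
  ext j
  simp [and_comm]

theorem IsKTauRegularSet.adjMat_mulVec_charVec {W : Type*} [Fintype W] {G : SimpleGraph W}
    {S : Set W} {k τ : ℕ} (hS : IsKTauRegularSet G S k τ) :
    adjMat G *ᵥ charVec S = ((k : ℝ) - τ) • charVec S + (τ : ℝ) • 1 := by
  ext i
  rw [adjMat_mulVec_charVec_apply]
  by_cases hi : i ∈ S
  · simp [hS.1 i hi, charVec, hi]
  · simp [hS.2 i hi, charVec, hi]

theorem stmt0_general {W : Type*} [Fintype W] (G : SimpleGraph W) (S : Set W) (k τ : ℕ)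
    (hτ : 0 < τ) (hS : IsKTauRegularSet G S k τ) (μ : ℝ) :
    IsNonMain G μ ↔ μ = (k : ℝ) - (τ : ℝ) ∨
      ∀ v : W → ℝ, (adjMat G).mulVec v = μ • v → ∑ i, charVec S i * v i = 0 := by
  have hτ_ne : (τ : ℝ) ≠ 0 := by positivity
  have key : ∀ v, adjMat G *ᵥ v = μ • v →
      (τ : ℝ) * ∑ i, v i = (μ - ((k : ℝ) - τ)) * (charVec S ⬝ᵥ v) := fun v hv =>
    G.isSymm_adjMatrix.mul_sum_eq_of_mulVec_eq hS.adjMat_mulVec_charVec hv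
  refine ⟨fun hmain => or_iff_not_imp_left.mpr fun hμ v hv => ?_, ?_⟩
  · have := key v hv
    rw [hmain v hv, mul_zero, eq_comm, mul_eq_zero, sub_eq_zero] at this
    exact this.resolve_left hμ
  · rintro (hμ | horth) v hv <;> have := key v hv
    · rwa [hμ, sub_self, zero_mul, mul_eq_zero, or_iff_right hτ_ne] at this
    · rwa [show charVec S ⬝ᵥ v = 0 from horth v hv, mul_zero, mul_eq_zero,
        or_iff_right hτ_ne] at this

/-- For a `(k,τ)`-regular set `S` with `τ > 0` and an eigenvalue `μ` of `A(G)`,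
`μ` is non-main iff `μ = k - τ` or the characteristic vector of `S` is orthogonal to the
eigenspace of `μ`. -/
theorem stmt0 {W : Type*} [Fintype W] (G : SimpleGraph W) (S : Set W) (k τ : ℕ)
    (hτ : 0 < τ) (hS : IsKTauRegularSet G S k τ) (μ : ℝ) (hμ : IsEigen G μ) :
    IsNonMain G μ ↔ μ = (k : ℝ) - (τ : ℝ) ∨
      ∀ v : W → ℝ, (adjMat G).mulVec v = μ • v → ∑ i, charVec S i * v i = 0 :=
  stmt0_general G S k τ hτ hS μ
end

section
/- Let H be a graph on vertices {1,…,p} and G_1,…,G_p arbitrary graphs. Let G be the H-join of G_1,…,G_p (the generalized join with S_i = V(G_i) for all i). If λ is a non-main eigenvalue of some G_i, then λ is an eigenvalue of G. -/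
open scoped Classical

/-!
Extend an eigenvector `v` of `G i` by zero to the whole join. At a vertex of `G i` the join's
adjacency acts on it as `A(G i)`; at a vertex of another part `G j` it only sees the sum of `v`
over `S i` (or nothing), which vanishes when `v` is orthogonal to the characteristic vector of `S i`.
-/

open Matrix

section ExtendSigma

variable {ι : Type*} {V : ι → Type*} {R : Type*}

theorem extend_sigmaMk_ne_zero [Zero R] {i : ι} {v : V i → R} (hv : v ≠ 0) :
    Function.extend (Sigma.mk i) v 0 ≠ 0 := fun h =>
  hv <| funext fun a => by
    simpa [sigma_mk_injective.extend_apply] using congrFun h ⟨i, a⟩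

theorem extend_sigmaMk_of_ne [Zero R] {i j : ι} (v : V i → R) (a : V j) (hji : j ≠ i) :
    Function.extend (Sigma.mk i) v 0 ⟨j, a⟩ = 0 :=
  Function.extend_apply' _ _ _ fun ⟨_, h⟩ => hji (congrArg Sigma.fst h).symm

theorem mulVec_extend_sigmaMk [Fintype ι] [∀ i, Fintype (V i)] [NonUnitalNonAssocSemiring R]
    {W : Type*} (M : Matrix W (Σ i, V i) R) (i : ι) (v : V i → R) (y : W) :
    (M *ᵥ Function.extend (Sigma.mk i) v 0) y = ∑ b, M y ⟨i, b⟩ * v b := by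
  rw [Matrix.mulVec, dotProduct, Fintype.sum_sigma, Finset.sum_eq_single i]
  · simp only [sigma_mk_injective.extend_apply]
  · intro j _ hji
    simp only [extend_sigmaMk_of_ne v _ hji, mul_zero, Finset.sum_const_zero]
  · exact fun h => (h (Finset.mem_univ i)).elim

end ExtendSigma

section GenJoin

variable {p : ℕ} {V : Fin p → Type*} (H : SimpleGraph (Fin p)) (G : ∀ i, SimpleGraph (V i))
  (S : ∀ i, Set (V i))

theorem genJoin_adj_mk_mk_self {i : Fin p} {a b : V i} :
    (genJoin H G S).Adj ⟨i, a⟩ ⟨i, b⟩ ↔ (G i).Adj a b := by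
  refine ⟨?_, fun h => Or.inl ⟨i, a, b, rfl, rfl, h⟩⟩
  rintro (⟨_, _, _, ha, hb, hab⟩ | ⟨hne, -⟩)
  · cases ha
    cases hb
    exact hab
  · exact absurd rfl hne

theorem genJoin_adj_mk_mk_of_ne {i j : Fin p} (a : V j) (b : V i) (hji : j ≠ i) :
    (genJoin H G S).Adj ⟨j, a⟩ ⟨i, b⟩ ↔ H.Adj j i ∧ a ∈ S j ∧ b ∈ S i := by
  refine ⟨?_, fun h => Or.inr ⟨hji, h⟩⟩
  rintro (⟨_, _, _, ha, hb, -⟩ | ⟨-, h⟩)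
  · cases ha
    cases hb
    exact absurd rfl hji
  · exact h

variable [∀ i, Fintype (V i)]

theorem adjMat_genJoin_mk_mk_self (i : Fin p) (a b : V i) :
    adjMat (genJoin H G S) ⟨i, a⟩ ⟨i, b⟩ = adjMat (G i) a b := by
  simp only [adjMat, genJoin_adj_mk_mk_self]

theorem adjMat_genJoin_mk_mk_of_ne {i j : Fin p} (a : V j) (b : V i) (hji : j ≠ i) :
    adjMat (genJoin H G S) ⟨j, a⟩ ⟨i, b⟩
      = (if H.Adj j i ∧ a ∈ S j then 1 else 0) * charVec (S i) b := by
  simp only [adjMat, charVec, genJoin_adj_mk_mk_of_ne H G S a b hji, ← and_assoc]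
  split_ifs <;> simp_all

theorem adjMat_genJoin_mulVec_extend {i : Fin p} {μ : ℝ} {v : V i → ℝ}
    (hv : adjMat (G i) *ᵥ v = μ • v) (hS : charVec (S i) ⬝ᵥ v = 0) :
    adjMat (genJoin H G S) *ᵥ Function.extend (Sigma.mk i) v 0
      = μ • Function.extend (Sigma.mk i) v 0 := by
  funext ⟨j, a⟩
  rw [mulVec_extend_sigmaMk, Pi.smul_apply]
  by_cases hji : j = i
  · subst hji
    simp only [adjMat_genJoin_mk_mk_self, sigma_mk_injective.extend_apply]
    exact congrFun hv a
  · simp only [adjMat_genJoin_mk_mk_of_ne H G S a _ hji, mul_assoc, ← Finset.mul_sum,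
      extend_sigmaMk_of_ne v a hji, smul_zero]
    rw [← dotProduct, hS, mul_zero]

theorem isEigen_genJoin {i : Fin p} {μ : ℝ} {v : V i → ℝ} (hv0 : v ≠ 0)
    (hv : adjMat (G i) *ᵥ v = μ • v) (hS : charVec (S i) ⬝ᵥ v = 0) :
    IsEigen (genJoin H G S) μ :=
  ⟨_, extend_sigmaMk_ne_zero hv0, adjMat_genJoin_mulVec_extend H G S hv hS⟩

end GenJoin

/-- non-main eigenvalues of the parts survive in the `H`-join. -/
theorem stmt2 {p : ℕ} {V : Fin p → Type*} [∀ i, Fintype (V i)]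
    (H : SimpleGraph (Fin p)) (G : ∀ i, SimpleGraph (V i))
    (i : Fin p) (μ : ℝ) (hnm : IsNonMain (G i) μ) (he : IsEigen (G i) μ) :
    IsEigen (genJoin H G (fun _ => Set.univ)) μ := by
  obtain ⟨v, hv0, hv⟩ := he
  refine isEigen_genJoin H G _ hv0 hv ?_
  simpa [charVec, dotProduct] using hnm v hv
end

section
/- Among the graphs G(n,k) = K_k ∨ K̄_{n−k} with 1 ≤ k ≤ n−1, the spread s(G(n,k)) = √((k−1)² + 4k(n−k)) is maximized exactly at k = ⌊2n/3⌋. -/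
open scoped Classical

/-! The join `K_a ∨ K̄_b` has an equitable partition into the clique and the independent set; its
quotient matrix `[[a - 1, b], [a, 0]]` has characteristic polynomial `x² - (a - 1)x - ab`, whose two
roots are the extreme adjacency eigenvalues, so the spread is `√((a - 1)² + 4ab)`. For `a = k`,
`b = n - k` this is `√f(k)` with `f(k) = -3k² + (4n - 2)k + 1`, a concave quadratic with vertex at
`(2n - 1)/3`, and `⌊2n/3⌋` is the integer strictly closest to that vertex. -/

lemma sq_le_add_iff_mem_Icc {p q x : ℝ} (hD : 0 ≤ p ^ 2 + 4 * q) :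
    x ^ 2 ≤ p * x + q ↔ x ∈ Set.Icc ((p - √(p ^ 2 + 4 * q)) / 2) ((p + √(p ^ 2 + 4 * q)) / 2) := by
  have hs := Real.sq_sqrt hD
  have hs0 := Real.sqrt_nonneg (p ^ 2 + 4 * q)
  have hfactor : x ^ 2 - (p * x + q) =
      (x - (p - √(p ^ 2 + 4 * q)) / 2) * (x - (p + √(p ^ 2 + 4 * q)) / 2) := by
    linear_combination (1 / 4 : ℝ) * hs
  constructor
  · intro h
    have hle : (x - (p - √(p ^ 2 + 4 * q)) / 2) * (x - (p + √(p ^ 2 + 4 * q)) / 2) ≤ 0 := by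
      rw [← hfactor]; linarith
    rcases mul_nonpos_iff.mp hle with ⟨h1, h2⟩ | ⟨h1, h2⟩ <;> exact ⟨by linarith, by linarith⟩
  · rintro ⟨h1, h2⟩
    nlinarith [mul_nonpos_of_nonneg_of_nonpos (sub_nonneg.mpr h1) (sub_nonpos.mpr h2)]

lemma spread_eq_of_isGreatest_of_isLeast {W : Type*} [Fintype W] {G : SimpleGraph W} {a b : ℝ}
    (hb : IsGreatest {μ | IsEigen G μ} b) (ha : IsLeast {μ | IsEigen G μ} a) :
    spread G = b - a := by
  rw [spread, lamMax, lamMin, hb.csSup_eq, ha.csInf_eq]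

section JoinTopBot

variable {α β : Type*} [Fintype α] [Fintype β]

lemma adjMat_joinG_top_bot_mulVec_inl (v : α ⊕ β → ℝ) (a : α) :
    (adjMat (joinG (⊤ : SimpleGraph α) (⊥ : SimpleGraph β))).mulVec v (Sum.inl a) =
      ∑ b, v (Sum.inl b) - v (Sum.inl a) + ∑ c, v (Sum.inr c) := by
  simp only [Matrix.mulVec, dotProduct, Fintype.sum_sum_type]
  simp only [adjMat, joinG, SimpleGraph.top_adj, ne_eq, SimpleGraph.bot_adj, ite_not, ite_mul,
    zero_mul, one_mul, ↓reduceIte, add_left_inj]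
  rw [eq_sub_iff_add_eq, ← Fintype.sum_ite_eq a (fun b => v (Sum.inl b)), ← Finset.sum_add_distrib]
  exact Finset.sum_congr rfl fun b _ => by split_ifs <;> simp_all

lemma adjMat_joinG_top_bot_mulVec_inr (v : α ⊕ β → ℝ) (c : β) :
    (adjMat (joinG (⊤ : SimpleGraph α) (⊥ : SimpleGraph β))).mulVec v (Sum.inr c) =
      ∑ b, v (Sum.inl b) := by
  simp [Matrix.mulVec, dotProduct, adjMat, joinG]

lemma isEigen_joinG_top_bot [Nonempty α] {μ : ℝ} (hμ : μ ≠ 0)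
    (h : μ ^ 2 = (Fintype.card α - 1) * μ + Fintype.card α * Fintype.card β) :
    IsEigen (joinG (⊤ : SimpleGraph α) (⊥ : SimpleGraph β)) μ := by
  refine ⟨Sum.elim (fun _ => μ) (fun _ => Fintype.card α), fun h0 => hμ ?_, funext ?_⟩
  · simpa using congrFun h0 (Sum.inl (Classical.arbitrary α))
  · rintro (a | c)
    · rw [adjMat_joinG_top_bot_mulVec_inl]
      simp only [Sum.elim_inl, Sum.elim_inr, Finset.sum_const, Finset.card_univ, nsmul_eq_mul,
        Pi.smul_apply, smul_eq_mul]
      linear_combination -h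
    · rw [adjMat_joinG_top_bot_mulVec_inr]
      simp [mul_comm]

/-- Away from the eigenvalues `0` and `-1`, whose eigenvectors have zero sum on both sides, an
eigenvector sums to `S₁ ≠ 0` on the clique, and summing the eigenvalue equation over each side gives
`(a - 1) S₁ + a S₂ = μ S₁` and `b S₁ = μ S₂`. -/
lemma IsEigen.sq_eq_of_joinG_top_bot {μ : ℝ}
    (h : IsEigen (joinG (⊤ : SimpleGraph α) (⊥ : SimpleGraph β)) μ) (h0 : μ ≠ 0) (h1 : μ ≠ -1) :
    μ ^ 2 = (Fintype.card α - 1) * μ + Fintype.card α * Fintype.card β := by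
  obtain ⟨v, hv0, hv⟩ := h
  set S₁ := ∑ a, v (Sum.inl a)
  set S₂ := ∑ c, v (Sum.inr c)
  have hinl (a : α) : S₁ - v (Sum.inl a) + S₂ = μ * v (Sum.inl a) := by
    simpa [adjMat_joinG_top_bot_mulVec_inl] using congrFun hv (Sum.inl a)
  have hinr (c : β) : S₁ = μ * v (Sum.inr c) := by
    simpa [adjMat_joinG_top_bot_mulVec_inr] using congrFun hv (Sum.inr c)
  have hsum₁ : Fintype.card α * S₁ - S₁ + Fintype.card α * S₂ = μ * S₁ := by
    have := Finset.sum_congr rfl fun a (_ : a ∈ Finset.univ) => hinl a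
    simpa [Finset.sum_add_distrib, Finset.sum_sub_distrib, ← Finset.mul_sum] using this
  have hsum₂ : Fintype.card β * S₁ = μ * S₂ := by
    have := Finset.sum_congr rfl fun c (_ : c ∈ Finset.univ) => hinr c
    simpa [← Finset.mul_sum] using this
  have hS₁ : S₁ ≠ 0 := by
    intro hS₁
    have hr (c : β) : v (Sum.inr c) = 0 := by
      simpa [h0, hS₁] using (hinr c).symm
    have hS₂ : S₂ = 0 := Finset.sum_eq_zero fun c _ => hr c
    have hl (a : α) : v (Sum.inl a) = 0 := by
      have : (μ + 1) * v (Sum.inl a) = 0 := by linear_combination -hinl a + hS₁ + hS₂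
      simpa [add_eq_zero_iff_eq_neg, h1] using this
    exact hv0 (funext fun x => x.casesOn hl hr)
  apply mul_left_cancel₀ hS₁
  linear_combination (-μ) * hsum₁ - Fintype.card α * hsum₂

lemma IsEigen.sq_le_of_joinG_top_bot [Nonempty β] {μ : ℝ}
    (h : IsEigen (joinG (⊤ : SimpleGraph α) (⊥ : SimpleGraph β)) μ) :
    μ ^ 2 ≤ (Fintype.card α - 1) * μ + Fintype.card α * Fintype.card β := by
  have hB : (1 : ℝ) ≤ Fintype.card β := by exact_mod_cast Fintype.card_pos
  by_cases h0 : μ = 0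
  · simpa [h0] using (by positivity : (0 : ℝ) ≤ Fintype.card α * Fintype.card β)
  by_cases h1 : μ = -1
  · subst h1; nlinarith [(Fintype.card α).cast_nonneg (α := ℝ)]
  exact (h.sq_eq_of_joinG_top_bot h0 h1).le

theorem spread_joinG_top_bot [Nonempty α] [Nonempty β] :
    spread (joinG (⊤ : SimpleGraph α) (⊥ : SimpleGraph β)) =
      √((Fintype.card α - 1) ^ 2 + 4 * Fintype.card α * Fintype.card β) := by
  rw [mul_assoc]
  set p : ℝ := Fintype.card α - 1
  set q : ℝ := Fintype.card α * Fintype.card β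
  have hq : 0 < q := by positivity
  have hD : 0 ≤ p ^ 2 + 4 * q := by positivity
  have hs := Real.sq_sqrt hD
  have hroot_add : ((p + √(p ^ 2 + 4 * q)) / 2) ^ 2 = p * ((p + √(p ^ 2 + 4 * q)) / 2) + q := by
    linear_combination hs / 4
  have hroot_sub : ((p - √(p ^ 2 + 4 * q)) / 2) ^ 2 = p * ((p - √(p ^ 2 + 4 * q)) / 2) + q := by
    linear_combination hs / 4
  have hprod : (p + √(p ^ 2 + 4 * q)) / 2 * ((p - √(p ^ 2 + 4 * q)) / 2) = -q := by
    linear_combination -hs / 4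
  have hne : (p + √(p ^ 2 + 4 * q)) / 2 * ((p - √(p ^ 2 + 4 * q)) / 2) ≠ 0 := by
    rw [hprod]; exact neg_ne_zero.mpr hq.ne'
  rw [spread_eq_of_isGreatest_of_isLeast (a := (p - √(p ^ 2 + 4 * q)) / 2)
    (b := (p + √(p ^ 2 + 4 * q)) / 2)]
  · ring
  · refine ⟨isEigen_joinG_top_bot (left_ne_zero_of_mul hne) hroot_add, fun μ hμ => ?_⟩
    exact ((sq_le_add_iff_mem_Icc hD).1 hμ.sq_le_of_joinG_top_bot).2
  · refine ⟨isEigen_joinG_top_bot (right_ne_zero_of_mul hne) hroot_sub, fun μ hμ => ?_⟩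
    exact ((sq_le_add_iff_mem_Icc hD).1 hμ.sq_le_of_joinG_top_bot).1

end JoinTopBot

theorem spread_Gnk {n k : ℕ} (hk : 0 < k) (hkn : k < n) :
    spread (Gnk n k) = √(((k : ℝ) - 1) ^ 2 + 4 * k * ((n : ℝ) - k)) := by
  have : Nonempty (Fin k) := ⟨⟨0, hk⟩⟩
  have : Nonempty (Fin (n - k)) := ⟨⟨0, Nat.sub_pos_of_lt hkn⟩⟩
  rw [Gnk, spread_joinG_top_bot, Fintype.card_fin, Fintype.card_fin, Nat.cast_sub hkn.le]

/-- The difference of the two sides is `(m - k)(4n - 2 - 3(m + k))`, and for `m = ⌊2n/3⌋` both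
factors have the sign of `m - k`. -/
lemma sub_one_sq_add_four_mul_mul_sub_lt {n k m : ℤ} (hm : 3 * m ≤ 2 * n) (hm' : 2 * n < 3 * m + 3)
    (hk : k ≠ m) : (k - 1) ^ 2 + 4 * k * (n - k) < (m - 1) ^ 2 + 4 * m * (n - m) := by
  have hdiff : (m - 1) ^ 2 + 4 * m * (n - m) - ((k - 1) ^ 2 + 4 * k * (n - k)) =
      (m - k) * (4 * n - 2 - 3 * (m + k)) := by ring
  rw [← sub_pos, hdiff]
  rcases hk.lt_or_gt with hlt | hgt
  · exact mul_pos (by omega) (by omega)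
  · exact mul_pos_of_neg_of_neg (by omega) (by omega)

theorem spread_Gnk_lt {n k : ℕ} (hk : 0 < k) (hkn : k < n) (hne : k ≠ 2 * n / 3) :
    spread (Gnk n k) < spread (Gnk n (2 * n / 3)) := by
  rw [spread_Gnk hk hkn, spread_Gnk (by omega) (by omega)]
  have hkn' : (k : ℝ) ≤ n := by exact_mod_cast hkn.le
  refine Real.sqrt_lt_sqrt (by nlinarith) ?_
  have hm : 3 * (2 * n / 3) ≤ 2 * n ∧ 2 * n < 3 * (2 * n / 3) + 3 := by omega
  generalize 2 * n / 3 = m at hm hne ⊢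
  have := sub_one_sq_add_four_mul_mul_sub_lt (n := n) (k := k) (m := m)
    (by omega) (by omega) (by exact_mod_cast hne)
  exact_mod_cast this

theorem stmt13_general (n : ℕ) :
    (∀ k, 1 ≤ k → k ≤ n - 1 → spread (Gnk n k) ≤ spread (Gnk n (2 * n / 3))) ∧
    (∀ k, 1 ≤ k → k ≤ n - 1 → spread (Gnk n k) = spread (Gnk n (2 * n / 3)) →
      k = 2 * n / 3) := by
  refine ⟨fun k hk hkn => ?_, fun k hk hkn heq => ?_⟩
  · rcases eq_or_ne k (2 * n / 3) with rfl | hne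
    · exact le_rfl
    · exact (spread_Gnk_lt hk (by omega) hne).le
  · by_contra hne
    exact (spread_Gnk_lt hk (by omega) hne).ne heq

/-- among `1 ≤ k ≤ n-1`, the spread of `G(n,k)` is maximized exactly at
`k = ⌊2n/3⌋`. -/
theorem stmt13 (n : ℕ) (hn : 2 ≤ n) :
    (∀ k, 1 ≤ k → k ≤ n - 1 → spread (Gnk n k) ≤ spread (Gnk n (2 * n / 3))) ∧
    (∀ k, 1 ≤ k → k ≤ n - 1 → spread (Gnk n k) = spread (Gnk n (2 * n / 3)) →
      k = 2 * n / 3) :=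
  stmt13_general n
end

section
/- Let H be a graph of order p with at least one edge and G_i be d_i-regular graphs of order n_i, and G the H-join of G_1,…,G_p. Let n↓ = min n_i, d̃↑ = max (d_i/n_i), d̃↓ = min (d_i/n_i). Then s(G) ≥ n↓·(s(H) − (d̃↑ − d̃↓)). -/
open scoped Classical

/-!
Test vectors that are constant on each block `V i` reduce the adjacency quadratic form of the
join to one on `ℝ^p`: for `x i = z i / n i` lifted to the blocks, `x ⬝ x = ∑ z_i² / n_i` and
`x ⬝ A x = z ⬝ A(H) z + ∑ (d_i / n_i) z_i²`, because the block partition is equitable with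
quotient matrix `A(H) N + D`. With `z = |y|` for an eigenvector `y` of `λ₁(H)` (the entries of
`A(H)` are nonnegative, so `|y|` only increases the form) this gives
`λ₁(G) ≥ n↓ (λ₁(H) + d̃↓)`, and with an eigenvector `z` of `λ_p(H)` it gives
`λ_n(G) ≤ n↓ (λ_p(H) + d̃↑)`. Replacing `∑ z_i² / n_i` by `|z|² / n↓` needs the signs
`λ₁(H) + d̃↓ ≥ 0` and `λ_p(H) + d̃↑ ≤ 0`; the latter holds because an edge of `H` forces
`λ_p(H) ≤ -1` while `d_i ≤ n_i`.
-/

open Matrix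

section Spectrum
variable {W : Type*} [Fintype W] [DecidableEq W]

theorem Matrix.setOf_mulVec_eq_smul_eq_spectrum (M : Matrix W W ℝ) :
    {μ | ∃ v : W → ℝ, v ≠ 0 ∧ M *ᵥ v = μ • v} = spectrum ℝ M := by
  ext μ
  rw [← spectrum_toLin', ← Module.End.hasEigenvalue_iff_mem_spectrum,
    Module.End.hasEigenvalue_iff, Submodule.ne_bot_iff]
  simp [and_comm]

namespace Matrix.IsHermitian
variable {M : Matrix W W ℝ}

theorem dotProduct_eq_sum_eigenvectorBasis (hM : M.IsHermitian) (v w : W → ℝ) :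
    v ⬝ᵥ w = ∑ i, (hM.eigenvectorBasis i ⬝ᵥ v) * (hM.eigenvectorBasis i ⬝ᵥ w) := by
  have := hM.eigenvectorBasis.sum_inner_mul_inner (WithLp.toLp 2 v) (WithLp.toLp 2 w)
  simp only [EuclideanSpace.inner_eq_star_dotProduct, star_trivial] at this
  rw [dotProduct_comm, ← this]
  simp only [dotProduct_comm w]

theorem dotProduct_mulVec_eq_sum_eigenvalues (hM : M.IsHermitian) (v : W → ℝ) :
    v ⬝ᵥ M *ᵥ v = ∑ i, hM.eigenvalues i * (hM.eigenvectorBasis i ⬝ᵥ v) ^ 2 := by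
  rw [hM.dotProduct_eq_sum_eigenvectorBasis]
  refine Finset.sum_congr rfl fun i _ => ?_
  rw [dotProduct_mulVec, ← mulVec_transpose, ← conjTranspose_eq_transpose_of_trivial, hM.eq,
    hM.mulVec_eigenvectorBasis, smul_dotProduct, smul_eq_mul]
  ring

theorem dotProduct_mulVec_le_sSup_spectrum (hM : M.IsHermitian) (v : W → ℝ) :
    v ⬝ᵥ M *ᵥ v ≤ sSup (spectrum ℝ M) * (v ⬝ᵥ v) := by
  rw [hM.dotProduct_mulVec_eq_sum_eigenvalues, hM.dotProduct_eq_sum_eigenvectorBasis v v,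
    Finset.mul_sum]
  simp only [← sq]
  gcongr with i
  exact le_csSup M.finite_real_spectrum.bddAbove (hM.eigenvalues_mem_spectrum_real i)

theorem sInf_spectrum_mul_le_dotProduct_mulVec (hM : M.IsHermitian) (v : W → ℝ) :
    sInf (spectrum ℝ M) * (v ⬝ᵥ v) ≤ v ⬝ᵥ M *ᵥ v := by
  rw [hM.dotProduct_mulVec_eq_sum_eigenvalues, hM.dotProduct_eq_sum_eigenvectorBasis v v,
    Finset.mul_sum]
  simp only [← sq]
  gcongr with i
  exact csInf_le M.finite_real_spectrum.bddBelow (hM.eigenvalues_mem_spectrum_real i)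

theorem spectrum_nonempty [Nonempty W] (hM : M.IsHermitian) : (spectrum ℝ M).Nonempty :=
  ⟨_, hM.eigenvalues_mem_spectrum_real (Classical.arbitrary W)⟩

end Matrix.IsHermitian

end Spectrum

theorem Matrix.dotProduct_mulVec_le_abs {W : Type*} [Fintype W] {A : Matrix W W ℝ}
    (hA : ∀ i j, 0 ≤ A i j) (y : W → ℝ) : y ⬝ᵥ A *ᵥ y ≤ |y| ⬝ᵥ A *ᵥ |y| := by
  simp only [dotProduct, mulVec, Finset.mul_sum, Pi.abs_apply]
  refine Finset.sum_le_sum fun i _ => Finset.sum_le_sum fun j _ => ?_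
  calc y i * (A i j * y j) ≤ |y i * (A i j * y j)| := le_abs_self _
    _ = |y i| * (A i j * |y j|) := by rw [abs_mul, abs_mul, abs_of_nonneg (hA i j)]

section WeightedSums
variable {ι : Type*} [Fintype ι]

theorem iInf_mul_sum_sq_div_le {w : ι → ℝ} (hw : ∀ i, 0 < w i) (z : ι → ℝ) :
    (⨅ i, w i) * ∑ i, z i ^ 2 / w i ≤ ∑ i, z i ^ 2 := by
  rw [Finset.mul_sum]
  gcongr with i
  calc (⨅ i, w i) * (z i ^ 2 / w i) ≤ w i * (z i ^ 2 / w i) := by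
        gcongr
        · exact div_nonneg (sq_nonneg _) (hw i).le
        · exact ciInf_le (Set.finite_range w).bddBelow i
    _ = z i ^ 2 := mul_div_cancel₀ _ (hw i).ne'

theorem sum_sq_div_pos {w : ι → ℝ} (hw : ∀ i, 0 < w i) {z : ι → ℝ} (hz : z ≠ 0) :
    0 < ∑ i, z i ^ 2 / w i := by
  obtain ⟨i, hi⟩ := Function.ne_iff.mp hz
  exact Finset.sum_pos' (fun j _ => div_nonneg (sq_nonneg _) (hw j).le)
    ⟨i, Finset.mem_univ _, div_pos (pow_two_pos_of_ne_zero hi) (hw i)⟩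

theorem iInf_mul_sum_sq_le (a z : ι → ℝ) : (⨅ i, a i) * ∑ i, z i ^ 2 ≤ ∑ i, a i * z i ^ 2 := by
  rw [Finset.mul_sum]
  gcongr with i
  exact ciInf_le (Set.finite_range a).bddBelow i

theorem sum_mul_sq_le_iSup_mul (a z : ι → ℝ) : ∑ i, a i * z i ^ 2 ≤ (⨆ i, a i) * ∑ i, z i ^ 2 := by
  rw [Finset.mul_sum]
  gcongr with i
  exact le_ciSup (Set.finite_range a).bddAbove i

end WeightedSums

section AdjacencySpectrum
variable {W : Type*} [Fintype W] (G : SimpleGraph W)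

theorem adjMat_isHermitian : (adjMat G).IsHermitian := by
  ext i j
  simp only [conjTranspose_apply, adjMat, star_trivial, G.adj_comm]

theorem adjMat_nonneg (i j : W) : 0 ≤ adjMat G i j := by
  unfold adjMat; split_ifs <;> norm_num

theorem setOf_isEigen_eq_spectrum [DecidableEq W] :
    {μ | IsEigen G μ} = spectrum ℝ (adjMat G) :=
  setOf_mulVec_eq_smul_eq_spectrum _

theorem dotProduct_adjMat_mulVec_le_lamMax (v : W → ℝ) :
    v ⬝ᵥ adjMat G *ᵥ v ≤ lamMax G * (v ⬝ᵥ v) := by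
  classical
  rw [lamMax, setOf_isEigen_eq_spectrum]
  exact (adjMat_isHermitian G).dotProduct_mulVec_le_sSup_spectrum v

theorem lamMin_mul_le_dotProduct_adjMat_mulVec (v : W → ℝ) :
    lamMin G * (v ⬝ᵥ v) ≤ v ⬝ᵥ adjMat G *ᵥ v := by
  classical
  rw [lamMin, setOf_isEigen_eq_spectrum]
  exact (adjMat_isHermitian G).sInf_spectrum_mul_le_dotProduct_mulVec v

theorem isEigen_lamMax [Nonempty W] : IsEigen G (lamMax G) := by
  classical
  have hM := adjMat_isHermitian G
  have := hM.spectrum_nonempty.csSup_mem (adjMat G).finite_real_spectrum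
  rwa [← setOf_isEigen_eq_spectrum] at this

theorem isEigen_lamMin [Nonempty W] : IsEigen G (lamMin G) := by
  classical
  have hM := adjMat_isHermitian G
  have := hM.spectrum_nonempty.csInf_mem (adjMat G).finite_real_spectrum
  rwa [← setOf_isEigen_eq_spectrum] at this

theorem lamMax_nonneg [Nonempty W] : 0 ≤ lamMax G := by
  classical
  have := dotProduct_adjMat_mulVec_le_lamMax G (Pi.single (Classical.arbitrary W) 1)
  simpa [adjMat] using this

theorem lamMin_le_neg_one {u v : W} (huv : G.Adj u v) : lamMin G ≤ -1 := by
  classical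
  set χ : W → ℝ := Pi.single u 1 - Pi.single v 1
  have hform : χ ⬝ᵥ adjMat G *ᵥ χ = -2 := by
    norm_num [χ, adjMat, huv, huv.symm, huv.ne, mulVec_sub, sub_dotProduct, dotProduct_sub]
  have hnorm : χ ⬝ᵥ χ = 2 := by
    norm_num [χ, huv.ne, huv.ne.symm, dotProduct_sub]
  have := lamMin_mul_le_dotProduct_adjMat_mulVec G χ
  rw [hform, hnorm] at this
  linarith

theorem IsReg.le_card {d : ℕ} (hG : IsReg G d) [Nonempty W] : d ≤ Fintype.card W := by
  obtain ⟨a⟩ := ‹Nonempty W›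
  have : (d : ℝ) ≤ Fintype.card W :=
    calc (d : ℝ) = ∑ j, adjMat G a j := (hG a).symm
      _ ≤ ∑ _j : W, (1 : ℝ) := by gcongr; unfold adjMat; split_ifs <;> norm_num
      _ = Fintype.card W := by simp
  exact_mod_cast this

end AdjacencySpectrum

section Join
variable {p : ℕ} {V : Fin p → Type*} (H : SimpleGraph (Fin p)) (G : ∀ i, SimpleGraph (V i))

theorem genJoin_univ_adj_mk_mk {i : Fin p} {a b : V i} :
    (genJoin H G fun _ => Set.univ).Adj ⟨i, a⟩ ⟨i, b⟩ ↔ (G i).Adj a b := by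
  constructor
  · rintro (⟨i', a', b', h1, h2, hab⟩ | ⟨hne, _⟩)
    · obtain ⟨rfl, ha⟩ := Sigma.mk.inj_iff.mp h1
      obtain ⟨-, hb⟩ := Sigma.mk.inj_iff.mp h2
      cases ha; cases hb
      exact hab
    · exact absurd rfl hne
  · exact fun h => Or.inl ⟨i, a, b, rfl, rfl, h⟩

theorem genJoin_univ_adj_mk_mk_of_ne {i j : Fin p} (hij : i ≠ j) {a : V i} {b : V j} :
    (genJoin H G fun _ => Set.univ).Adj ⟨i, a⟩ ⟨j, b⟩ ↔ H.Adj i j := by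
  constructor
  · rintro (⟨k, a', b', h1, h2, -⟩ | ⟨-, hH, -⟩)
    · cases h1; cases h2
      exact absurd rfl hij
    · exact hH
  · exact fun h => Or.inr ⟨hij, h, trivial, trivial⟩

variable [∀ i, Fintype (V i)]

theorem dotProduct_comp_sigma_fst (x y : Fin p → ℝ) :
    (x ∘ Sigma.fst : (Σ i, V i) → ℝ) ⬝ᵥ (y ∘ Sigma.fst) =
      ∑ i, (Fintype.card (V i) : ℝ) * (x i * y i) := by
  simp [dotProduct, Fintype.sum_sigma]

variable {H} {G} {d n : Fin p → ℕ}

theorem Mjoin_mulVec (x : Fin p → ℝ) :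
    Mjoin H n d *ᵥ x = adjMat H *ᵥ (fun i => (n i : ℝ) * x i) + fun i => (d i : ℝ) * x i := by
  rw [Mjoin, add_mulVec, ← mulVec_mulVec]
  congr <;> exact funext (mulVec_diagonal _ _)

theorem sum_adjMat_genJoin_mk (hreg : ∀ i, IsReg (G i) (d i))
    (hcard : ∀ i, Fintype.card (V i) = n i) (i : Fin p) (a : V i) (j : Fin p) :
    ∑ b : V j, adjMat (genJoin H G fun _ => Set.univ) ⟨i, a⟩ ⟨j, b⟩ =
      (if j = i then (d i : ℝ) else 0) + adjMat H i j * n j := by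
  by_cases hji : j = i
  · subst hji
    simp only [adjMat, genJoin_univ_adj_mk_mk, H.irrefl, if_true, if_false, zero_mul, add_zero]
    exact hreg j a
  · simp only [adjMat, genJoin_univ_adj_mk_mk_of_ne H G (Ne.symm hji), if_neg hji, zero_add,
      Finset.sum_const, Finset.card_univ, hcard j, nsmul_eq_mul]
    ring

theorem adjMat_genJoin_mulVec_comp_sigma_fst (hreg : ∀ i, IsReg (G i) (d i))
    (hcard : ∀ i, Fintype.card (V i) = n i) (x : Fin p → ℝ) :
    adjMat (genJoin H G fun _ => Set.univ) *ᵥ (x ∘ Sigma.fst) = (Mjoin H n d *ᵥ x) ∘ Sigma.fst := by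
  ext ⟨i, a⟩
  have hrow : ∀ j, ∑ b : V j, adjMat (genJoin H G fun _ => Set.univ) ⟨i, a⟩ ⟨j, b⟩ * x j =
      (if j = i then (d i : ℝ) * x i else 0) + adjMat H i j * (n j * x j) := by
    intro j
    rw [← Finset.sum_mul, sum_adjMat_genJoin_mk hreg hcard]
    split_ifs with h <;> simp [h] <;> ring
  simp only [mulVec, dotProduct, Fintype.sum_sigma, Function.comp_apply, hrow,
    Finset.sum_add_distrib, Finset.sum_ite_eq', Finset.mem_univ, if_true, Mjoin_mulVec]
  simp [mulVec, dotProduct, add_comm]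

theorem div_comp_sigma_fst_dotProduct_self (hcard : ∀ i, Fintype.card (V i) = n i)
    (hn : ∀ i, 0 < n i) (z : Fin p → ℝ) :
    ((fun i => z i / n i) ∘ Sigma.fst : (Σ i, V i) → ℝ) ⬝ᵥ ((fun i => z i / n i) ∘ Sigma.fst) =
      ∑ i, z i ^ 2 / n i := by
  rw [dotProduct_comp_sigma_fst]
  refine Finset.sum_congr rfl fun i _ => ?_
  have : (n i : ℝ) ≠ 0 := by exact_mod_cast (hn i).ne'
  rw [hcard]
  field_simp

theorem div_comp_sigma_fst_dotProduct_adjMat_genJoin_mulVec (hreg : ∀ i, IsReg (G i) (d i))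
    (hcard : ∀ i, Fintype.card (V i) = n i) (hn : ∀ i, 0 < n i) (z : Fin p → ℝ) :
    ((fun i => z i / n i) ∘ Sigma.fst : (Σ i, V i) → ℝ) ⬝ᵥ
        adjMat (genJoin H G fun _ => Set.univ) *ᵥ ((fun i => z i / n i) ∘ Sigma.fst) =
      z ⬝ᵥ adjMat H *ᵥ z + ∑ i, (d i : ℝ) / n i * z i ^ 2 := by
  have hn' : ∀ i, (n i : ℝ) ≠ 0 := fun i => by exact_mod_cast (hn i).ne'
  have hz : (fun i => (n i : ℝ) * (z i / n i)) = z := funext fun i => mul_div_cancel₀ _ (hn' i)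
  rw [adjMat_genJoin_mulVec_comp_sigma_fst hreg hcard, dotProduct_comp_sigma_fst, Mjoin_mulVec, hz,
    dotProduct, ← Finset.sum_add_distrib]
  refine Finset.sum_congr rfl fun i _ => ?_
  simp only [hcard, Pi.add_apply]
  field_simp [hn' i]

end Join

section JoinSpectrum
variable {p : ℕ} {V : Fin p → Type*} [∀ i, Fintype (V i)] {H : SimpleGraph (Fin p)}
  {G : ∀ i, SimpleGraph (V i)} {d n : Fin p → ℕ}

theorem iInf_mul_lamMax_add_le_lamMax_genJoin [Nonempty (Fin p)]
    (hreg : ∀ i, IsReg (G i) (d i)) (hcard : ∀ i, Fintype.card (V i) = n i) (hn : ∀ i, 0 < n i) :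
    (⨅ i, (n i : ℝ)) * (lamMax H + ⨅ i, (d i : ℝ) / n i) ≤
      lamMax (genJoin H G fun _ => Set.univ) := by
  obtain ⟨y, hy0, hy⟩ := isEigen_lamMax H
  have hnR : ∀ i, (0 : ℝ) < n i := fun i => by exact_mod_cast hn i
  set z := |y|
  set den := ∑ i, z i ^ 2 / n i
  have hzz : z ⬝ᵥ z = ∑ i, z i ^ 2 := by simp [z, dotProduct, sq]
  have hz0 : z ≠ 0 := fun h => hy0 (funext fun i => abs_eq_zero.mp (congrFun h i))
  have hden : 0 < den := sum_sq_div_pos hnR hz0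
  have hcoef : 0 ≤ lamMax H + ⨅ i, (d i : ℝ) / n i :=
    add_nonneg (lamMax_nonneg H) (le_ciInf fun i => by positivity)
  have hquad : (lamMax H + ⨅ i, (d i : ℝ) / n i) * ∑ i, z i ^ 2 ≤
      z ⬝ᵥ adjMat H *ᵥ z + ∑ i, (d i : ℝ) / n i * z i ^ 2 := by
    have habs : lamMax H * (z ⬝ᵥ z) ≤ z ⬝ᵥ adjMat H *ᵥ z :=
      calc lamMax H * (z ⬝ᵥ z) = y ⬝ᵥ adjMat H *ᵥ y := by
            rw [hy, dotProduct_smul, smul_eq_mul]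
            simp [z, dotProduct, abs_mul_abs_self]
        _ ≤ z ⬝ᵥ adjMat H *ᵥ z := dotProduct_mulVec_le_abs (adjMat_nonneg H) y
    rw [hzz] at habs
    linarith [iInf_mul_sum_sq_le (fun i => (d i : ℝ) / n i) z]
  have hray := dotProduct_adjMat_mulVec_le_lamMax (genJoin H G fun _ => Set.univ)
    ((fun i => z i / n i) ∘ Sigma.fst)
  rw [div_comp_sigma_fst_dotProduct_adjMat_genJoin_mulVec hreg hcard hn,
    div_comp_sigma_fst_dotProduct_self hcard hn] at hray
  refine le_of_mul_le_mul_right ?_ hden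
  calc (⨅ i, (n i : ℝ)) * (lamMax H + ⨅ i, (d i : ℝ) / n i) * den
      = (lamMax H + ⨅ i, (d i : ℝ) / n i) * ((⨅ i, (n i : ℝ)) * den) := by ring
    _ ≤ (lamMax H + ⨅ i, (d i : ℝ) / n i) * ∑ i, z i ^ 2 :=
        mul_le_mul_of_nonneg_left (iInf_mul_sum_sq_div_le hnR z) hcoef
    _ ≤ _ := hquad.trans hray

theorem lamMin_genJoin_le_iInf_mul_lamMin_add {u v : Fin p} (huv : H.Adj u v)
    (hreg : ∀ i, IsReg (G i) (d i)) (hcard : ∀ i, Fintype.card (V i) = n i) (hn : ∀ i, 0 < n i) :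
    lamMin (genJoin H G fun _ => Set.univ) ≤
      (⨅ i, (n i : ℝ)) * (lamMin H + ⨆ i, (d i : ℝ) / n i) := by
  have : Nonempty (Fin p) := ⟨u⟩
  obtain ⟨z, hz0, hz⟩ := isEigen_lamMin H
  have hnR : ∀ i, (0 : ℝ) < n i := fun i => by exact_mod_cast hn i
  set den := ∑ i, z i ^ 2 / n i
  have hden : 0 < den := sum_sq_div_pos hnR hz0
  have hcoef : lamMin H + ⨆ i, (d i : ℝ) / n i ≤ 0 := by
    have hle : (⨆ i, (d i : ℝ) / n i) ≤ 1 := ciSup_le fun i => by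
      have : Nonempty (V i) := Fintype.card_pos_iff.mp ((hcard i).symm ▸ hn i)
      rw [div_le_one (hnR i), ← hcard i]
      exact_mod_cast (hreg i).le_card
    linarith [lamMin_le_neg_one H huv]
  have hquad : z ⬝ᵥ adjMat H *ᵥ z + ∑ i, (d i : ℝ) / n i * z i ^ 2 ≤
      (lamMin H + ⨆ i, (d i : ℝ) / n i) * ∑ i, z i ^ 2 := by
    have heig : z ⬝ᵥ adjMat H *ᵥ z = lamMin H * ∑ i, z i ^ 2 := by
      rw [hz, dotProduct_smul, smul_eq_mul]
      simp [dotProduct, sq]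
    linarith [sum_mul_sq_le_iSup_mul (fun i => (d i : ℝ) / n i) z]
  have hray := lamMin_mul_le_dotProduct_adjMat_mulVec (genJoin H G fun _ => Set.univ)
    ((fun i => z i / n i) ∘ Sigma.fst)
  rw [div_comp_sigma_fst_dotProduct_adjMat_genJoin_mulVec hreg hcard hn,
    div_comp_sigma_fst_dotProduct_self hcard hn] at hray
  refine le_of_mul_le_mul_right ?_ hden
  calc lamMin (genJoin H G fun _ => Set.univ) * den
      ≤ (lamMin H + ⨆ i, (d i : ℝ) / n i) * ∑ i, z i ^ 2 := hray.trans hquad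
    _ ≤ (lamMin H + ⨆ i, (d i : ℝ) / n i) * ((⨅ i, (n i : ℝ)) * den) :=
        mul_le_mul_of_nonpos_left (iInf_mul_sum_sq_div_le hnR z) hcoef
    _ = (⨅ i, (n i : ℝ)) * (lamMin H + ⨆ i, (d i : ℝ) / n i) * den := by ring

end JoinSpectrum

theorem stmt15_general {p : ℕ} {V : Fin p → Type*} [∀ i, Fintype (V i)]
    (H : SimpleGraph (Fin p)) (G : ∀ i, SimpleGraph (V i)) (d n : Fin p → ℕ)
    (hreg : ∀ i, IsReg (G i) (d i)) (hcard : ∀ i, Fintype.card (V i) = n i)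
    (hn : ∀ i, 0 < n i) (hedge : H.edgeSet.Nonempty) :
    spread (genJoin H G (fun _ => Set.univ)) ≥
      (⨅ i, (n i : ℝ)) *
        (spread H - ((⨆ i, (d i : ℝ) / (n i : ℝ)) - (⨅ i, (d i : ℝ) / (n i : ℝ)))) := by
  obtain ⟨u, v, huv⟩ := SimpleGraph.ne_bot_iff_exists_adj.mp (SimpleGraph.edgeSet_nonempty.mp hedge)
  have : Nonempty (Fin p) := ⟨u⟩
  have hmax := iInf_mul_lamMax_add_le_lamMax_genJoin (H := H) hreg hcard hn
  have hmin := lamMin_genJoin_le_iInf_mul_lamMin_add huv hreg hcard hn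
  rw [spread, spread]
  linarith

/-- lower bound `s(G) ≥ n↓ (s(H) - (d̃↑ - d̃↓))` for the `H`-join, when `H` has
an edge. -/
theorem stmt15 {p : ℕ} (hp : 0 < p) {V : Fin p → Type*} [∀ i, Fintype (V i)]
    (H : SimpleGraph (Fin p)) (G : ∀ i, SimpleGraph (V i)) (d n : Fin p → ℕ)
    (hreg : ∀ i, IsReg (G i) (d i)) (hcard : ∀ i, Fintype.card (V i) = n i)
    (hn : ∀ i, 0 < n i) (hedge : H.edgeSet.Nonempty) :
    spread (genJoin H G (fun _ => Set.univ)) ≥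
      (⨅ i, (n i : ℝ)) *
        (spread H - ((⨆ i, (d i : ℝ) / (n i : ℝ)) - (⨅ i, (d i : ℝ) / (n i : ℝ)))) :=
  stmt15_general H G d n hreg hcard hn hedge
end
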